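/- The implicit factorization of the scaled ABS class holds: the i×i matrix L_i with entries (L_i)_{jk} = v_jᵀ A p_k satisfies (L_i)_{jk} = 0 whenever j < k and has nonzero diagonal entries (L_i)_{jj} = v_jᵀ A p_j; consequently L_i = V_iᵀ A P_i is a nonsingular lower triangular matrix, where V_i = [v₁,…,v_i] and P_i = [p₁,…,p_i]. -/
import Mathlib


open Matrix

/-- The matrix `L_i = V_iᵀ A P_i` with entries `(L_i)_{jk} = v_jᵀ A p_k`
(steps being 1-based). -/
def absLMat {m n : ℕ} (i : ℕ) (A : Matrix (Fin m) (Fin n) ℝ)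
    (v : ℕ → Fin m → ℝ) (p : ℕ → Fin n → ℝ) : Matrix (Fin i) (Fin i) ℝ :=
  Matrix.of fun j k : Fin i => v ((j : ℕ) + 1) ⬝ᵥ (A *ᵥ p ((k : ℕ) + 1))

lemma vecMulVec_mulVec' {n : ℕ} (a b c : Fin n → ℝ) :
    vecMulVec a b *ᵥ c = (b ⬝ᵥ c) • a := by
  funext x
  simp [vecMulVec, mulVec, dotProduct, Finset.mul_sum, mul_comm, mul_assoc, mul_left_comm, Finset.sum_mul]

/-- Implicit factorization of the scaled ABS class: `L_i = V_iᵀ A P_i` is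
lower triangular with nonzero diagonal entries `v_jᵀ A p_j`, hence nonsingular. -/
theorem abs_implicit_factorization
    (m n i : ℕ) (A : Matrix (Fin m) (Fin n) ℝ)
    (H : ℕ → Matrix (Fin n) (Fin n) ℝ)
    (v : ℕ → Fin m → ℝ) (w z p : ℕ → Fin n → ℝ)
    (hH1 : H 1 = 1)
    (hden : ∀ j, 1 ≤ j → j ≤ i → w j ⬝ᵥ (H j *ᵥ (Aᵀ *ᵥ v j)) ≠ 0)
    (hupd : ∀ j, 1 ≤ j → j ≤ i →
      H (j + 1) = H j -
        (w j ⬝ᵥ (H j *ᵥ (Aᵀ *ᵥ v j)))⁻¹ •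
          vecMulVec (H j *ᵥ (Aᵀ *ᵥ v j)) (w j ᵥ* H j))
    (hp : ∀ j, 1 ≤ j → j ≤ i → p j = (H j)ᵀ *ᵥ z j)
    (hpA : ∀ j, 1 ≤ j → j ≤ i → v j ⬝ᵥ (A *ᵥ p j) ≠ 0) :
    (∀ j k : Fin i, (j : ℕ) < (k : ℕ) → absLMat i A v p j k = 0) ∧
    (∀ j : Fin i, absLMat i A v p j j = v ((j : ℕ) + 1) ⬝ᵥ (A *ᵥ p ((j : ℕ) + 1)) ∧
      absLMat i A v p j j ≠ 0) ∧
    IsUnit (absLMat i A v p) := by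
  -- key invariance: H k annihilates Aᵀ v j for j < k ≤ i
  have hzero : ∀ k j, 1 ≤ j → j < k → k ≤ i → H k *ᵥ (Aᵀ *ᵥ v j) = 0 := by
    intro k
    induction k with
    | zero => intro j hj hjk hki; omega
    | succ k ih =>
      intro j hj hjk hki
      have hk1 : 1 ≤ k := by omega
      have hki' : k ≤ i := by omega
      rcases eq_or_lt_of_le (Nat.lt_succ_iff.mp hjk) with hjk' | hjk'
      · subst hjk'
        rw [hupd j hj hki', sub_mulVec, smul_mulVec, vecMulVec_mulVec',
          ← dotProduct_mulVec]
        rw [smul_smul, inv_mul_cancel₀ (hden j hj hki'), one_smul, sub_self]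
      · have h0 := ih j hj hjk' hki'
        rw [hupd k hk1 hki', sub_mulVec, smul_mulVec, vecMulVec_mulVec',
          ← dotProduct_mulVec, h0]
        simp
  -- strict lower triangularity
  have hlt : ∀ j k : Fin i, (j : ℕ) < (k : ℕ) → absLMat i A v p j k = 0 := by
    intro j k hjk
    have hk1 : (k : ℕ) + 1 ≤ i := k.isLt
    have hpk := hp ((k : ℕ) + 1) (by omega) hk1
    have h0 := hzero ((k : ℕ) + 1) ((j : ℕ) + 1) (by omega) (by omega) hk1
    show v ((j : ℕ) + 1) ⬝ᵥ (A *ᵥ p ((k : ℕ) + 1)) = 0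
    rw [hpk, dotProduct_mulVec, ← mulVec_transpose, dotProduct_mulVec,
      vecMul_transpose, h0, zero_dotProduct]
  have hdiag : ∀ j : Fin i,
      absLMat i A v p j j = v ((j : ℕ) + 1) ⬝ᵥ (A *ᵥ p ((j : ℕ) + 1)) ∧
      absLMat i A v p j j ≠ 0 := by
    intro j
    refine ⟨rfl, ?_⟩
    exact hpA ((j : ℕ) + 1) (by omega) j.isLt
  refine ⟨hlt, hdiag, ?_⟩
  rw [Matrix.isUnit_iff_isUnit_det, isUnit_iff_ne_zero]
  have hbt : (absLMat i A v p).BlockTriangular OrderDual.toDual := by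
    intro a b hab
    exact hlt a b hab
  rw [Matrix.det_of_lowerTriangular _ hbt]
  exact Finset.prod_ne_zero_iff.mpr fun j _ => (hdiag j).2
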